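/- arXiv:2503.01488 — 3 statements merged into one kernel-verified Lean document; each statement's English description precedes it below -/
import Mathlib

section
/- Let N ≥ 2, 1 ≤ k ≤ N and T ≥ 1 be natural numbers and let α be a real number with 0 < α < 1 − 1/N. Let r : {0,…,k} → ℝ satisfy submodularity (r(j−1) − r(j) ≥ r(j) − r(j+1) for all 1 ≤ j ≤ k−1) and r(k) ≤ r(0), and write r* := r(k). Let r̂ : {0,…,T} → ℝ satisfy r̂(0) = r(0), r̂(1) ≤ r(1), and the α-curvature condition (r̂(t) − r̂(t+1) ≥ α·(r̂(t−1) − r̂(t)) for all 1 ≤ t ≤ T−1). Then, setting γ := (1 − α^T)/((1 − α)·N), it holds that r̂(T) ≤ γ·r* + (1 − γ)·r(0). -/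
/-!
Submodularity makes every step of the optimal path lose at most the first step `r 0 - r 1`,
so `r 0 - r k ≤ k (r 0 - r 1) ≤ N (r 0 - r 1)`; as `rhat 1 ≤ r 1`, the greedy first step
gains at least `(r 0 - r k) / N`. The α-curvature condition keeps the `t`-th greedy gain above
`α ^ t` times the first, and summing the geometric series gives
`rhat 0 - rhat T ≥ (1 - α ^ T) / (1 - α) · (r 0 - r k) / N`.
-/

open Finset

theorem sub_le_mul_of_forall_sub_succ_le {f : ℕ → ℝ} {n : ℕ} {c : ℝ}
    (h : ∀ j < n, f j - f (j + 1) ≤ c) : f 0 - f n ≤ n * c := by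
  rw [← sum_range_sub' f n]
  simpa using sum_le_card_nsmul (range n) _ c fun j hj => h j (mem_range.1 hj)

theorem sum_le_sub_of_forall_le_sub_succ {f c : ℕ → ℝ} {n : ℕ}
    (h : ∀ j < n, c j ≤ f j - f (j + 1)) : ∑ j ∈ range n, c j ≤ f 0 - f n := by
  rw [← sum_range_sub' f n]
  exact sum_le_sum fun j hj => h j (mem_range.1 hj)

theorem sub_succ_le_first_of_submodular {r : ℕ → ℝ} {k : ℕ}
    (hsub : ∀ j : ℕ, 1 ≤ j → j ≤ k - 1 → r (j - 1) - r j ≥ r j - r (j + 1)) :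
    ∀ j < k, r j - r (j + 1) ≤ r 0 - r 1
  | 0, _ => le_rfl
  | j + 1, hj => by
    have := hsub (j + 1) (by omega) (by omega)
    have := sub_succ_le_first_of_submodular hsub j (by omega)
    simp only [Nat.add_sub_cancel] at *
    linarith

theorem pow_mul_first_le_sub_succ_of_curvature {f : ℕ → ℝ} {T : ℕ} {α : ℝ} (hα : 0 ≤ α)
    (hcurv : ∀ t : ℕ, 1 ≤ t → t ≤ T - 1 → f t - f (t + 1) ≥ α * (f (t - 1) - f t)) :
    ∀ t < T, α ^ t * (f 0 - f 1) ≤ f t - f (t + 1)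
  | 0, _ => by simp
  | t + 1, ht => by
    have hstep := hcurv (t + 1) (by omega) (by omega)
    have ih := pow_mul_first_le_sub_succ_of_curvature hα hcurv t (by omega)
    simp only [Nat.add_sub_cancel] at hstep
    calc α ^ (t + 1) * (f 0 - f 1) = α * (α ^ t * (f 0 - f 1)) := by ring
      _ ≤ α * (f t - f (t + 1)) := mul_le_mul_of_nonneg_left ih hα
      _ ≤ _ := hstep

theorem geom_mul_first_le_sub_of_curvature {f : ℕ → ℝ} {T : ℕ} {α : ℝ} (hα0 : 0 ≤ α)
    (hα1 : α ≠ 1)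
    (hcurv : ∀ t : ℕ, 1 ≤ t → t ≤ T - 1 → f t - f (t + 1) ≥ α * (f (t - 1) - f t)) :
    (1 - α ^ T) / (1 - α) * (f 0 - f 1) ≤ f 0 - f T := by
  have hgeom : ∑ t ∈ range T, α ^ t = (1 - α ^ T) / (1 - α) :=
    eq_div_of_mul_eq (sub_ne_zero.2 hα1.symm) (geom_sum_mul_neg α T)
  rw [← hgeom, sum_mul]
  exact sum_le_sub_of_forall_le_sub_succ (pow_mul_first_le_sub_succ_of_curvature hα0 hcurv)

theorem approximation_guarantee_scalar_general
    (N k T : ℕ) (hk1 : 1 ≤ k) (hkN : k ≤ N)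
    (α : ℝ) (hα0 : 0 < α) (hα1 : α < 1 - 1 / (N : ℝ))
    (r rhat : ℕ → ℝ)
    (hsub : ∀ j : ℕ, 1 ≤ j → j ≤ k - 1 → r (j - 1) - r j ≥ r j - r (j + 1))
    (hrk : r k ≤ r 0)
    (hhat0 : rhat 0 = r 0) (hhat1 : rhat 1 ≤ r 1)
    (hcurv : ∀ t : ℕ, 1 ≤ t → t ≤ T - 1 →
      rhat t - rhat (t + 1) ≥ α * (rhat (t - 1) - rhat t)) :
    rhat T ≤ ((1 - α ^ T) / ((1 - α) * (N : ℝ))) * r k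
      + (1 - (1 - α ^ T) / ((1 - α) * (N : ℝ))) * r 0 := by
  have hk : (1 : ℝ) ≤ k := by exact_mod_cast hk1
  have hkN' : (k : ℝ) ≤ N := by exact_mod_cast hkN
  have hα1' : α < 1 := hα1.trans_le (by simp only [sub_le_self_iff]; positivity)
  set S := (1 - α ^ T) / (1 - α)
  have hS : 0 ≤ S := div_nonneg (sub_nonneg.2 (pow_le_one₀ hα0.le hα1'.le)) (by linarith)
  have hopt : r 0 - r k ≤ k * (r 0 - r 1) :=
    sub_le_mul_of_forall_sub_succ_le (sub_succ_le_first_of_submodular hsub)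
  have hstep_nonneg : 0 ≤ r 0 - r 1 := by nlinarith
  have hfirst : r 0 - r k ≤ (rhat 0 - rhat 1) * N :=
    calc r 0 - r k ≤ (r 0 - r 1) * k := by linarith
      _ ≤ (rhat 0 - rhat 1) * N := by gcongr <;> linarith
  have hgreedy : S * (rhat 0 - rhat 1) ≤ rhat 0 - rhat T :=
    geom_mul_first_le_sub_of_curvature hα0.le hα1'.ne hcurv
  have hγ : (1 - α ^ T) / ((1 - α) * N) = S / N := by rw [div_div]
  rw [hγ]
  have hscaled : S / N * (r 0 - r k) ≤ S * (rhat 0 - rhat 1) := by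
    rw [div_mul_eq_mul_div, mul_div_assoc]
    exact mul_le_mul_of_nonneg_left (div_le_of_le_mul₀ (by linarith) (by linarith) hfirst) hS
  linarith

/-- Scalar core of the Approximation Guarantee (Theorem 1):
given a submodular optimal-path sequence `r` on `{0,…,k}` with `r k ≤ r 0`,
and an algorithm sequence `rhat` on `{0,…,T}` with `rhat 0 = r 0`, `rhat 1 ≤ r 1`
and the `α`-curvature condition, with `γ = (1 - α^T)/((1 - α)·N)` one has
`rhat T ≤ γ · r k + (1 - γ) · r 0`. -/
theorem approximation_guarantee_scalar
    (N k T : ℕ) (hN : 2 ≤ N) (hk1 : 1 ≤ k) (hkN : k ≤ N) (hT : 1 ≤ T)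
    (α : ℝ) (hα0 : 0 < α) (hα1 : α < 1 - 1 / (N : ℝ))
    (r rhat : ℕ → ℝ)
    (hsub : ∀ j : ℕ, 1 ≤ j → j ≤ k - 1 → r (j - 1) - r j ≥ r j - r (j + 1))
    (hrk : r k ≤ r 0)
    (hhat0 : rhat 0 = r 0) (hhat1 : rhat 1 ≤ r 1)
    (hcurv : ∀ t : ℕ, 1 ≤ t → t ≤ T - 1 →
      rhat t - rhat (t + 1) ≥ α * (rhat (t - 1) - rhat t)) :
    rhat T ≤ ((1 - α ^ T) / ((1 - α) * (N : ℝ))) * r k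
      + (1 - (1 - α ^ T) / ((1 - α) * (N : ℝ))) * r 0 :=
  approximation_guarantee_scalar_general N k T hk1 hkN α hα0 hα1 r rhat hsub hrk hhat0 hhat1 hcurv
end

section
/- Let m ≥ 1, let r ∈ ℝ^m be a weight vector with r_i > 0 for all i, and let N ≥ 2, 1 ≤ k ≤ N, T ≥ 1 be natural numbers and 0 < α < 1 − 1/N. Let L^0, L^T ∈ ℝ^m be loss vectors with maximum relative objective values ř^0 := max_i L^0_i·r_i and ř^T := max_i L^T_i·r_i, and let ř* ∈ ℝ. Suppose there exist real sequences r : {0,…,k} → ℝ with submodularity, r(0) = ř^0, r(k) = ř* and ř* ≤ ř^0, and r̂ : {0,…,T} → ℝ with r̂(0) = ř^0, r̂(1) ≤ r(1), r̂(T) = ř^T, satisfying the α-curvature condition. Then, with γ := (1 − α^T)/((1 − α)·N), for every i ∈ [m] one has L^T_i ≤ (γ·ř* + (1 − γ)·ř^0)/r_i; that is, L^T lies in the set A := { L ∈ ℝ^m : L_i ≤ (γ·ř* + (1 − γ)·ř^0)/r_i for all i }. -/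
/-- Vector form of the Approximation Guarantee (Theorem 1). -/
theorem approximation_guarantee_vector
    (m : ℕ) (hm : 1 ≤ m)
    (hne : (Finset.univ : Finset (Fin m)).Nonempty)
    (w : Fin m → ℝ) (hw : ∀ i, 0 < w i)
    (N k T : ℕ) (hN : 2 ≤ N) (hk1 : 1 ≤ k) (hkN : k ≤ N) (hT : 1 ≤ T)
    (α : ℝ) (hα0 : 0 < α) (hα1 : α < 1 - 1 / (N : ℝ))
    (L0 LT : Fin m → ℝ) (rstar rc0 rcT : ℝ)
    (hrc0 : rc0 = Finset.univ.sup' hne fun i => L0 i * w i)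
    (hrcT : rcT = Finset.univ.sup' hne fun i => LT i * w i)
    (r rhat : ℕ → ℝ)
    (hsub : ∀ j : ℕ, 1 ≤ j → j ≤ k - 1 → r (j - 1) - r j ≥ r j - r (j + 1))
    (hr0 : r 0 = rc0) (hrk : r k = rstar) (hstar : rstar ≤ rc0)
    (hhat0 : rhat 0 = rc0) (hhat1 : rhat 1 ≤ r 1) (hhatT : rhat T = rcT)
    (hcurv : ∀ t : ℕ, 1 ≤ t → t ≤ T - 1 →
      rhat t - rhat (t + 1) ≥ α * (rhat (t - 1) - rhat t)) :
    ∀ i : Fin m,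
      LT i ≤ (((1 - α ^ T) / ((1 - α) * (N : ℝ))) * rstar
        + (1 - (1 - α ^ T) / ((1 - α) * (N : ℝ))) * rc0) / w i := by
  intro i
  have hN0 : (0:ℝ) < (N:ℝ) := by positivity
  have hα1' : α < 1 := by
    have h1 : (0:ℝ) < 1 / (N:ℝ) := by positivity
    linarith
  -- A1: differences of r are bounded by the first difference
  have A1 : ∀ j : ℕ, 1 ≤ j → j ≤ k → r (j - 1) - r j ≤ r 0 - r 1 := by
    intro j
    induction j with
    | zero => intro h; omega
    | succ n ih =>
      intro _ h2
      rcases Nat.eq_zero_or_pos n with hn | hn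
      · subst hn; simp
      · have hs := hsub n hn (by omega)
        have := ih hn (by omega)
        simp only [Nat.add_sub_cancel]
        linarith
  -- A2: telescoping bound
  have A2 : ∀ j : ℕ, j ≤ k → r 0 - r j ≤ (j : ℝ) * (r 0 - r 1) := by
    intro j
    induction j with
    | zero => intro _; simp
    | succ n ih =>
      intro h
      have h1 := A1 (n + 1) (by omega) h
      have h2 := ih (by omega)
      simp only [Nat.add_sub_cancel] at h1
      push_cast
      nlinarith
  -- first difference of r bound
  have hd1 : (rc0 - rstar) / (N : ℝ) ≤ r 0 - r 1 := by
    have h2 := A2 k (le_refl k)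
    rw [hr0, hrk] at h2
    have hk0 : (0:ℝ) < (k:ℝ) := by exact_mod_cast hk1
    have hkN' : (k:ℝ) ≤ (N:ℝ) := by exact_mod_cast hkN
    rw [div_le_iff₀ hN0, hr0]
    have h3 : 0 ≤ r 0 - r 1 := by nlinarith
    nlinarith [mul_le_mul_of_nonneg_right hkN' h3]
  set e1 : ℝ := rhat 0 - rhat 1 with he1
  have he1lb : (rc0 - rstar) / (N : ℝ) ≤ e1 := by
    have : rc0 - r 1 ≤ e1 := by rw [he1, hhat0]; linarith
    linarith
  have he1nn : 0 ≤ e1 := le_trans (div_nonneg (by linarith) hN0.le) he1lb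
  -- B: each difference of rhat is at least α^i * e1
  have B : ∀ t : ℕ, t < T → α ^ t * e1 ≤ rhat t - rhat (t + 1) := by
    intro t
    induction t with
    | zero => intro _; simp [he1]
    | succ n ih =>
      intro h
      have hc := hcurv (n + 1) (by omega) (by omega)
      simp only [Nat.add_sub_cancel] at hc
      have hih := ih (by omega)
      have : α * (α ^ n * e1) ≤ α * (rhat n - rhat (n + 1)) :=
        mul_le_mul_of_nonneg_left hih hα0.le
      calc α ^ (n+1) * e1 = α * (α ^ n * e1) := by ring
        _ ≤ α * (rhat n - rhat (n + 1)) := this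
        _ ≤ rhat (n + 1) - rhat (n + 1 + 1) := hc
  -- sum the differences up
  have hsum : (∑ t ∈ Finset.range T, α ^ t) * e1 ≤ rhat 0 - rhat T := by
    rw [← Finset.sum_range_sub' rhat T, Finset.sum_mul]
    exact Finset.sum_le_sum fun t ht => B t (Finset.mem_range.mp ht)
  have hgeom : (∑ t ∈ Finset.range T, α ^ t) = (1 - α ^ T) / (1 - α) := by
    rw [geom_sum_eq (by linarith : α ≠ 1)]
    rw [div_eq_div_iff (by linarith) (by linarith)]
    ring
  set S : ℝ := (1 - α ^ T) / (1 - α) with hS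
  have hαT : α ^ T < 1 := pow_lt_one₀ hα0.le hα1' (by omega)
  have hSpos : 0 < S := div_pos (by linarith) (by linarith)
  rw [hgeom] at hsum
  -- bound on rhat T
  have hrhatT : rhat T ≤ rc0 - S * ((rc0 - rstar) / (N : ℝ)) := by
    have h1 : S * ((rc0 - rstar) / (N : ℝ)) ≤ S * e1 :=
      mul_le_mul_of_nonneg_left he1lb hSpos.le
    rw [hhat0] at hsum
    nlinarith [h1, hsum]
  -- finish
  have hwi := hw i
  rw [le_div_iff₀ hwi]
  have hle : LT i * w i ≤ rcT := by
    rw [hrcT]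
    exact Finset.le_sup' (fun j => LT j * w j) (Finset.mem_univ i)
  have hgamma : ((1 - α ^ T) / ((1 - α) * (N : ℝ))) = S / (N : ℝ) := by
    rw [hS, div_div]
  rw [hgamma]
  have : rcT ≤ S / (N:ℝ) * rstar + (1 - S / (N:ℝ)) * rc0 := by
    rw [← hhatT]
    have : rc0 - S * ((rc0 - rstar) / (N : ℝ))
        = S / (N:ℝ) * rstar + (1 - S / (N:ℝ)) * rc0 := by
      field_simp
      ring
    linarith [hrhatT]
  linarith
end

section
/- Let n ≥ 1 and let a ∈ ℝ^n be the vector with every coordinate equal to 1/√n (so ‖a‖ = 1). Consider the two objectives l_1(x) := 1 − exp(−‖x − a‖²) and l_2(x) := 1 − exp(−‖x + a‖²) on ℝ^n with the Euclidean norm, to be minimized. Then a point x ∈ ℝ^n is Pareto optimal for (l_1, l_2) if and only if x = t·a for some t ∈ [−1, 1]. -/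
/-!
Since `r ↦ 1 - exp (-r ^ 2)` is strictly increasing on `[0, ∞)`, the two objectives may be
replaced by the distances to `a` and to `-a`. A point of the segment `[a, -a]` cannot be dominated,
by the triangle inequality. A point off the segment is strictly dominated by its nearest point on
the segment: the angle at that nearest point is obtuse, so it is strictly closer to every point of
the segment, in particular to both `a` and `-a`.
-/

/-- `x` is Pareto optimal for the objectives `f i` (to be minimized) if no `y`
weakly improves all objectives and strictly improves one. -/
def ParetoOptimal {E : Type*} {m : ℕ} (f : Fin m → E → ℝ) (x : E) : Prop :=
  ¬ ∃ y : E, (∀ i, f i y ≤ f i x) ∧ ∃ j, f j y < f j x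

open RealInnerProductSpace

theorem paretoOptimal_pair_iff {E : Type*} {f g : E → ℝ} {x : E} :
    ParetoOptimal ![f, g] x ↔ ¬ ∃ y, f y ≤ f x ∧ g y ≤ g x ∧ (f y < f x ∨ g y < g x) := by
  simp only [ParetoOptimal, Fin.forall_fin_two, Fin.exists_fin_two, Matrix.cons_val_zero,
    Matrix.cons_val_one, and_assoc]

theorem paretoOptimal_comp_iff_of_strictMonoOn {E : Type*} {m : ℕ} {f : Fin m → E → ℝ} {x : E}
    {g : ℝ → ℝ} {s : Set ℝ} (hg : StrictMonoOn g s) (hf : ∀ i y, f i y ∈ s) :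
    ParetoOptimal (fun i => g ∘ f i) x ↔ ParetoOptimal f x := by
  simp only [ParetoOptimal, Function.comp_apply, hg.le_iff_le (hf _ _) (hf _ _),
    hg.lt_iff_lt (hf _ _) (hf _ _)]

theorem paretoOptimal_dist_of_dist_add_dist_eq {E : Type*} [PseudoMetricSpace E] {p q x : E}
    (h : dist p x + dist x q = dist p q) :
    ParetoOptimal ![fun y => dist y p, fun y => dist y q] x := by
  rw [paretoOptimal_pair_iff]
  rintro ⟨y, hp, hq, hlt⟩
  have := dist_triangle_left p q y
  rw [dist_comm p x] at h
  rcases hlt with hlt | hlt <;> linarith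

theorem exists_mem_forall_dist_lt_of_notMem {F : Type*} [NormedAddCommGroup F]
    [InnerProductSpace ℝ F] {K : Set F} (hne : K.Nonempty) (hK : IsComplete K)
    (hconv : Convex ℝ K) {x : F} (hx : x ∉ K) :
    ∃ y ∈ K, ∀ z ∈ K, dist y z < dist x z := by
  obtain ⟨y, hyK, hy⟩ := exists_norm_eq_iInf_of_complete_convex hne hK hconv x
  have hobtuse := (norm_eq_iInf_iff_real_inner_le_zero hconv hyK).1 hy
  refine ⟨y, hyK, fun z hz => ?_⟩
  have hxy : 0 < ‖x - y‖ := norm_pos_iff.2 (sub_ne_zero.2 (ne_of_mem_of_not_mem hyK hx).symm)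
  have hpyth : ‖x - z‖ ^ 2 = ‖x - y‖ ^ 2 - 2 * ⟪x - y, z - y⟫ + ‖z - y‖ ^ 2 := by
    rw [← norm_sub_sq_real, sub_sub_sub_cancel_right]
  have hsq : ‖z - y‖ ^ 2 < ‖x - z‖ ^ 2 := by nlinarith [hobtuse z hz]
  rw [dist_eq_norm, dist_eq_norm, norm_sub_rev y z]
  exact (pow_lt_pow_iff_left₀ (norm_nonneg _) (norm_nonneg _) two_ne_zero).1 hsq

theorem paretoOptimal_dist_pair_iff_mem_segment {F : Type*} [NormedAddCommGroup F]
    [InnerProductSpace ℝ F] {p q x : F} :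
    ParetoOptimal ![fun y => dist y p, fun y => dist y q] x ↔ x ∈ segment ℝ p q := by
  refine ⟨fun hx => ?_, fun hx =>
    paretoOptimal_dist_of_dist_add_dist_eq (dist_add_dist_of_mem_segment hx)⟩
  by_contra hnot
  have hcompact : IsCompact (segment ℝ p q) :=
    convexHull_pair (𝕜 := ℝ) p q ▸ (Set.toFinite _).isCompact_convexHull ℝ
  obtain ⟨y, -, hy⟩ := exists_mem_forall_dist_lt_of_notMem ⟨p, left_mem_segment ℝ p q⟩
    hcompact.isComplete (convex_segment p q) hnot
  rw [paretoOptimal_pair_iff] at hx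
  exact hx ⟨y, (hy p (left_mem_segment ℝ p q)).le, (hy q (right_mem_segment ℝ p q)).le,
    Or.inl (hy p (left_mem_segment ℝ p q))⟩

theorem segment_self_neg_eq_image {𝕜 E : Type*} [Field 𝕜] [LinearOrder 𝕜] [IsStrictOrderedRing 𝕜]
    [AddCommGroup E] [Module 𝕜 E] (a : E) :
    segment 𝕜 a (-a) = (fun t : 𝕜 => t • a) '' Set.Icc (-1) 1 := by
  have h := image_segment 𝕜 (LinearMap.toSpanSingleton 𝕜 E a).toAffineMap (-1) 1
  simp only [LinearMap.coe_toAffineMap, LinearMap.toSpanSingleton_apply, neg_smul, one_smul] at h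
  rw [segment_symm, ← h, segment_eq_Icc (by norm_num)]

theorem strictMonoOn_one_sub_exp_neg_sq :
    StrictMonoOn (fun r : ℝ => 1 - Real.exp (-r ^ 2)) (Set.Ici 0) := by
  intro r hr s _ hrs
  have hsq : r ^ 2 < s ^ 2 := pow_lt_pow_left₀ hrs hr two_ne_zero
  simpa using Real.exp_lt_exp.2 (neg_lt_neg hsq)

theorem paretoOptimal_synthetic_iff_segment_general
    (n : ℕ) (a x : EuclideanSpace ℝ (Fin n)) :
    ParetoOptimal
      ![fun y => 1 - Real.exp (-‖y - a‖ ^ 2),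
        fun y => 1 - Real.exp (-‖y + a‖ ^ 2)] x ↔
      ∃ t ∈ Set.Icc (-1 : ℝ) 1, x = t • a := by
  have hobj : ![fun y => 1 - Real.exp (-‖y - a‖ ^ 2), fun y => 1 - Real.exp (-‖y + a‖ ^ 2)] =
      fun i => (fun r => 1 - Real.exp (-r ^ 2)) ∘ ![fun y => dist y a, fun y => dist y (-a)] i := by
    ext i y; fin_cases i <;> simp [dist_eq_norm]
  rw [hobj, paretoOptimal_comp_iff_of_strictMonoOn strictMonoOn_one_sub_exp_neg_sq
    (fun i y => by fin_cases i <;> exact dist_nonneg), paretoOptimal_dist_pair_iff_mem_segment,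
    segment_self_neg_eq_image]
  simp [eq_comm]

/-- Ground-truth Pareto set for the synthetic task: with
`a = (1/√n, …, 1/√n)`, the Pareto set of `l₁(x) = 1 - exp(-‖x - a‖²)` and
`l₂(x) = 1 - exp(-‖x + a‖²)` is the segment `{t • a : t ∈ [-1, 1]}`. -/
theorem paretoOptimal_synthetic_iff_segment
    (n : ℕ) (hn : 1 ≤ n) (a x : EuclideanSpace ℝ (Fin n))
    (ha : ∀ i, a i = 1 / Real.sqrt n) :
    ParetoOptimal
      ![fun y => 1 - Real.exp (-‖y - a‖ ^ 2),
        fun y => 1 - Real.exp (-‖y + a‖ ^ 2)] x ↔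
      ∃ t ∈ Set.Icc (-1 : ℝ) 1, x = t • a :=
  paretoOptimal_synthetic_iff_segment_general n a x
end
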